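/- A ρ-matching R for a multisegment m over ℤ is maximal in the domination order if and only if for every pair (i,j) ∈ Y^ρ_m × X^ρ_m with Δ_i ≺ Δ_j, exactly one of the following holds: (1) both R(i) and R⁻¹(j) are defined; (2) R(i) is defined, R⁻¹(j) is undefined, and Δ_j ≥ Δ_{R(i)}; (3) R(i) is undefined, R⁻¹(j) is defined, and Δ_i ≤ Δ_{R⁻¹(j)}. -/
import Mathlib


/-- Precedence of segments over `ℤ`. -/
def SegPrec (a b a' b' : ℤ) : Prop := a < a' ∧ a' ≤ b + 1 ∧ b < b'

/-- Total (lexicographic) order on segments: `[a,b] ≤ [a',b']` iff `b < b'`, or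
`b = b'` and `a ≤ a'`. -/
def SegLE (a b a' b' : ℤ) : Prop := b < b' ∨ (b = b' ∧ a ≤ a')

/-- Strict version of `SegLE`. -/
def SegLT (a b a' b' : ℤ) : Prop := b < b' ∨ (b = b' ∧ a < a')

/-- A `ρ`-matching for the multisegment `(a, b)`: a one-to-one relation from
`Y^ρ = {i : b(Δ_i) = ρ}` to `X^ρ = {j : b(Δ_j) = ρ+1}` such that `Δ_i ≺ Δ_j` for each
matched pair. -/
def IsMatching {ι : Type} (a b : ι → ℤ) (ρ : ℤ) (R : Set (ι × ι)) : Prop :=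
  (∀ p ∈ R, a p.1 = ρ ∧ a p.2 = ρ + 1 ∧ SegPrec (a p.1) (b p.1) (a p.2) (b p.2)) ∧
  (∀ p ∈ R, ∀ q ∈ R, p.1 = q.1 → p = q) ∧
  (∀ p ∈ R, ∀ q ∈ R, p.2 = q.2 → p = q)

/-- `A(R)`: the unmatched elements of `Y^ρ`. -/
def unmatchedA {ι : Type} (a : ι → ℤ) (ρ : ℤ) (R : Set (ι × ι)) : Set ι :=
  {i | a i = ρ ∧ ∀ j, (i, j) ∉ R}

/-- `B(R)`: the unmatched elements of `X^ρ`. -/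
def unmatchedB {ι : Type} (a : ι → ℤ) (ρ : ℤ) (R : Set (ι × ι)) : Set ι :=
  {j | a j = ρ + 1 ∧ ∀ i, (i, j) ∉ R}

/-- A saturated `ρ`-matching. -/
def Saturated {ι : Type} (a b : ι → ℤ) (ρ : ℤ) (R : Set (ι × ι)) : Prop :=
  (∀ i ∈ unmatchedA a ρ R, ∀ j ∈ unmatchedB a ρ R,
    ¬ SegPrec (a i) (b i) (a j) (b j)) ∧
  (∀ p ∈ R, ∀ i' ∈ unmatchedA a ρ R,
    SegPrec (a i') (b i') (a p.2) (b p.2) → SegLE (a i') (b i') (a p.1) (b p.1))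

/-- `R₂` dominates `R₁` (one elementary move). -/
def Dominates {ι : Type} (a b : ι → ℤ) (ρ : ℤ) (R₁ R₂ : Set (ι × ι)) : Prop :=
  IsMatching a b ρ R₁ ∧ IsMatching a b ρ R₂ ∧
  (R₁ ⊆ R₂ ∨
    (∃ i j k : ι, R₂ \ R₁ = {(j, k)} ∧ R₁ \ R₂ = {(i, k)} ∧
      SegLT (a i) (b i) (a j) (b j)) ∨
    (∃ i j k : ι, R₂ \ R₁ = {(i, k)} ∧ R₁ \ R₂ = {(i, j)} ∧
      SegLT (a k) (b k) (a j) (b j)))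


section Aux
variable {ι : Type} [Fintype ι]

open Classical in
noncomputable def rkk (a b : ι → ℤ) (i : ι) : ℕ :=
  (Finset.univ.filter (fun i' => SegLT (a i') (b i') (a i) (b i))).card

noncomputable def wt (a b : ι → ℤ) (p : ι × ι) : ℤ :=
  (Fintype.card ι + 1 : ℤ) + rkk a b p.1 - rkk a b p.2

noncomputable def phi (a b : ι → ℤ) (R : Set (ι × ι)) : ℤ :=
  ∑ p : ι × ι, R.indicator (wt a b) p

lemma segLT_irrefl {x y : ℤ} : ¬ SegLT x y x y := by unfold SegLT; omega

lemma segLT_trans {x1 y1 x2 y2 x3 y3 : ℤ} (h1 : SegLT x1 y1 x2 y2)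
    (h2 : SegLT x2 y2 x3 y3) : SegLT x1 y1 x3 y3 := by
  unfold SegLT at *; omega

lemma not_segLE {x y x' y' : ℤ} (h : ¬ SegLE x y x' y') : SegLT x' y' x y := by
  unfold SegLE at h; unfold SegLT; omega

lemma segLE_not_segLT {x y x' y' : ℤ} (h : SegLE x y x' y') : ¬ SegLT x' y' x y := by
  unfold SegLE at h; unfold SegLT; omega

lemma rkk_le (a b : ι → ℤ) (i : ι) : rkk a b i ≤ Fintype.card ι := by
  classical
  exact (Finset.card_filter_le _ _).trans_eq (by simp)

lemma one_le_wt (a b : ι → ℤ) (p : ι × ι) : 1 ≤ wt a b p := by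
  have h1 : (rkk a b p.2 : ℤ) ≤ Fintype.card ι := by exact_mod_cast rkk_le a b p.2
  have h2 : (0:ℤ) ≤ rkk a b p.1 := Int.natCast_nonneg _
  unfold wt; omega

lemma rkk_lt (a b : ι → ℤ) {i j : ι} (h : SegLT (a i) (b i) (a j) (b j)) :
    rkk a b i < rkk a b j := by
  classical
  apply Finset.card_lt_card
  constructor
  · intro x hx
    simp only [Finset.mem_filter, Finset.mem_univ, true_and] at hx ⊢
    exact segLT_trans hx h
  · intro hsub
    have : i ∈ Finset.univ.filter (fun i' => SegLT (a i') (b i') (a j) (b j)) := by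
      simp only [Finset.mem_filter, Finset.mem_univ, true_and]; exact h
    have := hsub this
    simp only [Finset.mem_filter, Finset.mem_univ, true_and] at this
    exact segLT_irrefl this

lemma phi_le_of_subset (a b : ι → ℤ) {R₁ R₂ : Set (ι × ι)} (h : R₁ ⊆ R₂) :
    phi a b R₁ ≤ phi a b R₂ := by
  apply Finset.sum_le_sum
  intro p _
  exact Set.indicator_le_indicator_of_subset h (fun q => by simp only [Pi.zero_apply]; linarith [one_le_wt a b q]) p

lemma phi_swap (a b : ι → ℤ) {R₁ R₂ : Set (ι × ι)} {p q : ι × ι} (hpq : p ≠ q)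
    (h2 : R₂ \ R₁ = {q}) (h1 : R₁ \ R₂ = {p}) :
    phi a b R₂ = phi a b R₁ + (wt a b q - wt a b p) := by
  classical
  have hq2 : q ∈ R₂ ∧ q ∉ R₁ := by
    have : q ∈ R₂ \ R₁ := by rw [h2]; rfl
    exact this
  have hp1 : p ∈ R₁ ∧ p ∉ R₂ := by
    have : p ∈ R₁ \ R₂ := by rw [h1]; rfl
    exact this
  have key : ∀ x : ι × ι, x ≠ p → x ≠ q →
      R₂.indicator (wt a b) x - R₁.indicator (wt a b) x = 0 := by
    intro x hxp hxq
    have h1' : x ∈ R₁ → x ∈ R₂ := by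
      intro hx; by_contra hx2
      have : x ∈ R₁ \ R₂ := ⟨hx, hx2⟩
      rw [h1] at this; exact hxp this
    have h2' : x ∈ R₂ → x ∈ R₁ := by
      intro hx; by_contra hx2
      have : x ∈ R₂ \ R₁ := ⟨hx, hx2⟩
      rw [h2] at this; exact hxq this
    by_cases hx : x ∈ R₁
    · rw [Set.indicator_of_mem hx, Set.indicator_of_mem (h1' hx)]; ring
    · rw [Set.indicator_of_notMem hx, Set.indicator_of_notMem (fun h => hx (h2' h))]; ring
  have : phi a b R₂ - phi a b R₁ = ∑ x : ι × ι,
      (R₂.indicator (wt a b) x - R₁.indicator (wt a b) x) := by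
    rw [Finset.sum_sub_distrib]; rfl
  have hsum : ∑ x : ι × ι, (R₂.indicator (wt a b) x - R₁.indicator (wt a b) x)
      = wt a b q - wt a b p := by
    rw [← Finset.sum_subset (Finset.subset_univ ({p, q} : Finset (ι × ι)))
      (fun x _ hx => key x (fun h => hx (by simp [h])) (fun h => hx (by simp [h])))]
    rw [Finset.sum_pair hpq]
    rw [Set.indicator_of_mem hq2.1, Set.indicator_of_notMem hq2.2,
      Set.indicator_of_mem hp1.1, Set.indicator_of_notMem hp1.2]
    ring
  omega

lemma phi_insert (a b : ι → ℤ) {R₁ R₂ : Set (ι × ι)} {q : ι × ι}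
    (h2 : R₂ \ R₁ = {q}) (h1 : R₁ ⊆ R₂) :
    phi a b R₂ = phi a b R₁ + wt a b q := by
  classical
  have hq2 : q ∈ R₂ ∧ q ∉ R₁ := by
    have : q ∈ R₂ \ R₁ := by rw [h2]; rfl
    exact this
  have key : ∀ x : ι × ι, x ≠ q →
      R₂.indicator (wt a b) x - R₁.indicator (wt a b) x = 0 := by
    intro x hxq
    have h2' : x ∈ R₂ → x ∈ R₁ := by
      intro hx; by_contra hx2
      have : x ∈ R₂ \ R₁ := ⟨hx, hx2⟩
      rw [h2] at this; exact hxq this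
    by_cases hx : x ∈ R₁
    · rw [Set.indicator_of_mem hx, Set.indicator_of_mem (h1 hx)]; ring
    · rw [Set.indicator_of_notMem hx, Set.indicator_of_notMem (fun h => hx (h2' h))]; ring
  have hsum : ∑ x : ι × ι, (R₂.indicator (wt a b) x - R₁.indicator (wt a b) x)
      = wt a b q := by
    rw [← Finset.sum_subset (Finset.subset_univ ({q} : Finset (ι × ι)))
      (fun x _ hx => key x (fun h => hx (by simp [h])))]
    rw [Finset.sum_singleton,
      Set.indicator_of_mem hq2.1, Set.indicator_of_notMem hq2.2]
    ring
  have : phi a b R₂ - phi a b R₁ = ∑ x : ι × ι,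
      (R₂.indicator (wt a b) x - R₁.indicator (wt a b) x) := by
    rw [Finset.sum_sub_distrib]; rfl
  omega

end Aux

section Main
variable {ι : Type} [Fintype ι]


lemma dominates_eq {a b : ι → ℤ} {ρ : ℤ} {R R₂ : Set (ι × ι)}
    (hcond : ∀ i j : ι, a i = ρ → a j = ρ + 1 → SegPrec (a i) (b i) (a j) (b j) →
        (((∃ k, (i, k) ∈ R) ∧ (∃ l, (l, j) ∈ R)) ∨
          ((∃ k, (i, k) ∈ R ∧ SegLE (a k) (b k) (a j) (b j)) ∧ (∀ l, (l, j) ∉ R)) ∨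
          ((∀ k, (i, k) ∉ R) ∧ (∃ l, (l, j) ∈ R ∧ SegLE (a i) (b i) (a l) (b l)))))
    (hdom : Dominates a b ρ R R₂) : R₂ = R := by
  obtain ⟨hRm, hR2m, hcase⟩ := hdom
  rcases hcase with hsub | ⟨i, j, k, h2d, h1d, hlt⟩ | ⟨i, j, k, h2d, h1d, hlt⟩
  · apply Set.Subset.antisymm _ hsub
    intro p hp
    by_contra hnp
    obtain ⟨hp1, hp2, hprec⟩ := hR2m.1 p hp
    have hiu : ∀ k, (p.1, k) ∉ R := by
      intro k hk
      have hk2 : (p.1, k) ∈ R₂ := hsub hk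
      have heq := hR2m.2.1 _ hk2 p hp rfl
      exact hnp (heq ▸ hk)
    have hju : ∀ l, (l, p.2) ∉ R := by
      intro l hl
      have hl2 : (l, p.2) ∈ R₂ := hsub hl
      have heq := hR2m.2.2 _ hl2 p hp rfl
      exact hnp (heq ▸ hl)
    rcases hcond p.1 p.2 hp1 hp2 hprec with ⟨⟨k, hk⟩, _⟩ | ⟨⟨k, hk, _⟩, _⟩ | ⟨_, ⟨l, hl, _⟩⟩
    · exact hiu k hk
    · exact hiu k hk
    · exact hju l hl
  · -- move 2 is impossible under hcond
    exfalso
    have hij : i ≠ j := by rintro rfl; exact segLT_irrefl hlt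
    have hjk2 : (j, k) ∈ R₂ ∧ (j, k) ∉ R := by
      have : (j, k) ∈ R₂ \ R := by rw [h2d]; rfl
      exact this
    have hik1 : (i, k) ∈ R ∧ (i, k) ∉ R₂ := by
      have : (i, k) ∈ R \ R₂ := by rw [h1d]; rfl
      exact this
    obtain ⟨hj1, hk1, hprec⟩ := hR2m.1 (j, k) hjk2.1
    have hju : ∀ k', (j, k') ∉ R := by
      intro k' hk'
      have hne : ((j, k') : ι × ι) ≠ (i, k) := by
        intro h; exact hij (congrArg Prod.fst h).symm
      have hk'2 : (j, k') ∈ R₂ := by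
        by_contra h2
        have : ((j, k') : ι × ι) ∈ R \ R₂ := ⟨hk', h2⟩
        rw [h1d] at this
        exact hne this
      have heq := hR2m.2.1 _ hk'2 _ hjk2.1 rfl
      exact hjk2.2 (heq ▸ hk')
    rcases hcond j k hj1 hk1 hprec with ⟨⟨k', hk'⟩, _⟩ | ⟨⟨k', hk', _⟩, _⟩ | ⟨_, ⟨l, hl, hle⟩⟩
    · exact hju k' hk'
    · exact hju k' hk'
    · have heq := hRm.2.2 _ hl _ hik1.1 rfl
      have : l = i := congrArg Prod.fst heq
      rw [this] at hle
      exact segLE_not_segLT hle hlt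
  · -- move 3 is impossible under hcond
    exfalso
    have hkj : k ≠ j := by rintro rfl; exact segLT_irrefl hlt
    have hik2 : (i, k) ∈ R₂ ∧ (i, k) ∉ R := by
      have : (i, k) ∈ R₂ \ R := by rw [h2d]; rfl
      exact this
    have hij1 : (i, j) ∈ R ∧ (i, j) ∉ R₂ := by
      have : (i, j) ∈ R \ R₂ := by rw [h1d]; rfl
      exact this
    obtain ⟨hi1, hk1, hprec⟩ := hR2m.1 (i, k) hik2.1
    have hku : ∀ i', (i', k) ∉ R := by
      intro i' hi'
      have hne : ((i', k) : ι × ι) ≠ (i, j) := by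
        intro h; exact hkj (congrArg Prod.snd h)
      have hi'2 : (i', k) ∈ R₂ := by
        by_contra h2
        have : ((i', k) : ι × ι) ∈ R \ R₂ := ⟨hi', h2⟩
        rw [h1d] at this
        exact hne this
      have heq := hR2m.2.2 _ hi'2 _ hik2.1 rfl
      exact hik2.2 (heq ▸ hi')
    rcases hcond i k hi1 hk1 hprec with ⟨_, ⟨l, hl⟩⟩ | ⟨⟨k', hk', hle⟩, _⟩ | ⟨hnk, _⟩
    · exact hku l hl
    · have heq := hRm.2.1 _ hk' _ hij1.1 rfl
      have : k' = j := congrArg Prod.snd heq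
      rw [this] at hle
      exact segLE_not_segLT hle hlt
    · exact hnk j hij1.1

end Main

section Main2
variable {ι : Type} [Fintype ι]

lemma phi_dominates {a b : ι → ℤ} {ρ : ℤ} {R₁ R₂ : Set (ι × ι)}
    (hdom : Dominates a b ρ R₁ R₂) : phi a b R₁ ≤ phi a b R₂ := by
  obtain ⟨hRm, hR2m, hcase⟩ := hdom
  rcases hcase with hsub | ⟨i, j, k, h2d, h1d, hlt⟩ | ⟨i, j, k, h2d, h1d, hlt⟩
  · exact phi_le_of_subset a b hsub
  · have hij : i ≠ j := by rintro rfl; exact segLT_irrefl hlt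
    have hpq : ((i, k) : ι × ι) ≠ (j, k) := by
      intro h; exact hij (congrArg Prod.fst h)
    have := phi_swap a b hpq h2d h1d
    have hrk : rkk a b i < rkk a b j := rkk_lt a b hlt
    have hw : wt a b (j, k) - wt a b (i, k) = (rkk a b j : ℤ) - rkk a b i := by
      unfold wt; push_cast; ring
    omega
  · have hkj : k ≠ j := by rintro rfl; exact segLT_irrefl hlt
    have hpq : ((i, j) : ι × ι) ≠ (i, k) := by
      intro h; exact hkj (congrArg Prod.snd h).symm
    have := phi_swap a b hpq h2d h1d
    have hrk : rkk a b k < rkk a b j := rkk_lt a b hlt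
    have hw : wt a b (i, k) - wt a b (i, j) = (rkk a b j : ℤ) - rkk a b k := by
      unfold wt; push_cast; ring
    omega

lemma phi_chain {a b : ι → ℤ} {ρ : ℤ} {R₁ R₂ : Set (ι × ι)}
    (h : Relation.ReflTransGen (Dominates a b ρ) R₁ R₂) :
    phi a b R₁ ≤ phi a b R₂ := by
  induction h with
  | refl => exact le_refl _
  | tail _ hstep ih => exact ih.trans (phi_dominates hstep)

end Main2

section Main3
variable {ι : Type} [Fintype ι]

lemma construct_A {a b : ι → ℤ} {ρ : ℤ} {R : Set (ι × ι)} (hR : IsMatching a b ρ R)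
    {i j : ι} (hi : a i = ρ) (hj : a j = ρ + 1)
    (hprec : SegPrec (a i) (b i) (a j) (b j))
    (hiu : ∀ k, (i, k) ∉ R) (hju : ∀ l, (l, j) ∉ R) :
    ∃ R', Dominates a b ρ R R' ∧ phi a b R < phi a b R' := by
  refine ⟨insert (i, j) R, ⟨hR, ⟨?_, ?_, ?_⟩, Or.inl (Set.subset_insert _ _)⟩, ?_⟩
  · rintro p hp
    rcases Set.mem_insert_iff.mp hp with rfl | hp
    · exact ⟨hi, hj, hprec⟩
    · exact hR.1 p hp
  · rintro ⟨p1, p2⟩ hp ⟨q1, q2⟩ hq h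
    simp only at h
    rcases Set.mem_insert_iff.mp hp with hp | hp <;>
      rcases Set.mem_insert_iff.mp hq with hq | hq
    · rw [hp, hq]
    · exfalso
      have e1 : p1 = i := congrArg Prod.fst hp
      rw [← h, e1] at hq
      exact hiu q2 hq
    · exfalso
      have e1 : q1 = i := congrArg Prod.fst hq
      rw [h, e1] at hp
      exact hiu p2 hp
    · exact hR.2.1 _ hp _ hq h
  · rintro ⟨p1, p2⟩ hp ⟨q1, q2⟩ hq h
    simp only at h
    rcases Set.mem_insert_iff.mp hp with hp | hp <;>
      rcases Set.mem_insert_iff.mp hq with hq | hq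
    · rw [hp, hq]
    · exfalso
      have e2 : p2 = j := congrArg Prod.snd hp
      rw [← h, e2] at hq
      exact hju q1 hq
    · exfalso
      have e2 : q2 = j := congrArg Prod.snd hq
      rw [h, e2] at hp
      exact hju p1 hp
    · exact hR.2.2 _ hp _ hq h
  · have hdiff : insert (i, j) R \ R = ({(i, j)} : Set (ι × ι)) := by
      ext x
      simp only [Set.mem_diff, Set.mem_insert_iff, Set.mem_singleton_iff]
      constructor
      · rintro ⟨h1 | h1, h2⟩
        · exact h1
        · exact absurd h1 h2
      · rintro rfl
        exact ⟨Or.inl rfl, hiu j⟩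
    have := phi_insert a b hdiff (Set.subset_insert _ _)
    have := one_le_wt a b (i, j)
    omega

lemma construct_B {a b : ι → ℤ} {ρ : ℤ} {R : Set (ι × ι)} (hR : IsMatching a b ρ R)
    {i j k : ι} (hi : a i = ρ) (hj : a j = ρ + 1)
    (hprec : SegPrec (a i) (b i) (a j) (b j))
    (hik : (i, k) ∈ R) (hju : ∀ l, (l, j) ∉ R)
    (hlt : SegLT (a j) (b j) (a k) (b k)) :
    ∃ R', Dominates a b ρ R R' ∧ phi a b R < phi a b R' := by
  have hkj : j ≠ k := by rintro rfl; exact segLT_irrefl hlt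
  have hijR : (i, j) ∉ R := hju i
  have hd2 : insert (i, j) (R \ {(i, k)}) \ R = ({(i, j)} : Set (ι × ι)) := by
    ext x
    simp only [Set.mem_diff, Set.mem_insert_iff, Set.mem_singleton_iff]
    constructor
    · rintro ⟨h1 | ⟨h1, _⟩, h2⟩
      · exact h1
      · exact absurd h1 h2
    · rintro rfl
      exact ⟨Or.inl rfl, hijR⟩
  have hd1 : R \ insert (i, j) (R \ {(i, k)}) = ({(i, k)} : Set (ι × ι)) := by
    ext x
    simp only [Set.mem_diff, Set.mem_insert_iff, Set.mem_singleton_iff]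
    constructor
    · rintro ⟨h1, h2⟩
      by_contra hne
      exact h2 (Or.inr ⟨h1, hne⟩)
    · rintro rfl
      refine ⟨hik, ?_⟩
      rintro (h | ⟨_, h⟩)
      · exact hkj (congrArg Prod.snd h).symm
      · exact h rfl
  refine ⟨insert (i, j) (R \ {(i, k)}), ⟨hR, ⟨?_, ?_, ?_⟩,
    Or.inr (Or.inr ⟨i, k, j, hd2, hd1, hlt⟩)⟩, ?_⟩
  · rintro p hp
    rcases Set.mem_insert_iff.mp hp with rfl | hp
    · exact ⟨hi, hj, hprec⟩
    · exact hR.1 p hp.1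
  · rintro ⟨p1, p2⟩ hp ⟨q1, q2⟩ hq h
    simp only at h
    rcases Set.mem_insert_iff.mp hp with hp | hp <;>
      rcases Set.mem_insert_iff.mp hq with hq | hq
    · rw [hp, hq]
    · exfalso
      have e1 : p1 = i := congrArg Prod.fst hp
      have e : i = q1 := by rw [← e1]; exact h
      have heq := hR.2.1 (i, k) hik (q1, q2) hq.1 e
      exact hq.2 heq.symm
    · exfalso
      have e1 : q1 = i := congrArg Prod.fst hq
      have e : i = p1 := by rw [← e1]; exact h.symm
      have heq := hR.2.1 (i, k) hik (p1, p2) hp.1 e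
      exact hp.2 heq.symm
    · exact hR.2.1 _ hp.1 _ hq.1 h
  · rintro ⟨p1, p2⟩ hp ⟨q1, q2⟩ hq h
    simp only at h
    rcases Set.mem_insert_iff.mp hp with hp | hp <;>
      rcases Set.mem_insert_iff.mp hq with hq | hq
    · rw [hp, hq]
    · exfalso
      have e2 : p2 = j := congrArg Prod.snd hp
      rw [← h, e2] at hq
      exact hju q1 hq.1
    · exfalso
      have e2 : q2 = j := congrArg Prod.snd hq
      rw [h, e2] at hp
      exact hju p1 hp.1
    · exact hR.2.2 _ hp.1 _ hq.1 h
  · have hpq : ((i, k) : ι × ι) ≠ (i, j) := by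
      intro h; exact hkj (congrArg Prod.snd h).symm
    have := phi_swap a b hpq hd2 hd1
    have hrk : rkk a b j < rkk a b k := rkk_lt a b hlt
    have hw : wt a b (i, j) - wt a b (i, k) = (rkk a b k : ℤ) - rkk a b j := by
      unfold wt; push_cast; ring
    omega

lemma construct_C {a b : ι → ℤ} {ρ : ℤ} {R : Set (ι × ι)} (hR : IsMatching a b ρ R)
    {i j l : ι} (hi : a i = ρ) (hj : a j = ρ + 1)
    (hprec : SegPrec (a i) (b i) (a j) (b j))
    (hlj : (l, j) ∈ R) (hiu : ∀ k, (i, k) ∉ R)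
    (hlt : SegLT (a l) (b l) (a i) (b i)) :
    ∃ R', Dominates a b ρ R R' ∧ phi a b R < phi a b R' := by
  have hli : l ≠ i := by rintro rfl; exact segLT_irrefl hlt
  have hijR : (i, j) ∉ R := hiu j
  have hd2 : insert (i, j) (R \ {(l, j)}) \ R = ({(i, j)} : Set (ι × ι)) := by
    ext x
    simp only [Set.mem_diff, Set.mem_insert_iff, Set.mem_singleton_iff]
    constructor
    · rintro ⟨h1 | ⟨h1, _⟩, h2⟩
      · exact h1
      · exact absurd h1 h2
    · rintro rfl
      exact ⟨Or.inl rfl, hijR⟩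
  have hd1 : R \ insert (i, j) (R \ {(l, j)}) = ({(l, j)} : Set (ι × ι)) := by
    ext x
    simp only [Set.mem_diff, Set.mem_insert_iff, Set.mem_singleton_iff]
    constructor
    · rintro ⟨h1, h2⟩
      by_contra hne
      exact h2 (Or.inr ⟨h1, hne⟩)
    · rintro rfl
      refine ⟨hlj, ?_⟩
      rintro (h | ⟨_, h⟩)
      · exact hli (congrArg Prod.fst h)
      · exact h rfl
  refine ⟨insert (i, j) (R \ {(l, j)}), ⟨hR, ⟨?_, ?_, ?_⟩,
    Or.inr (Or.inl ⟨l, i, j, hd2, hd1, hlt⟩)⟩, ?_⟩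
  · rintro p hp
    rcases Set.mem_insert_iff.mp hp with rfl | hp
    · exact ⟨hi, hj, hprec⟩
    · exact hR.1 p hp.1
  · rintro ⟨p1, p2⟩ hp ⟨q1, q2⟩ hq h
    simp only at h
    rcases Set.mem_insert_iff.mp hp with hp | hp <;>
      rcases Set.mem_insert_iff.mp hq with hq | hq
    · rw [hp, hq]
    · exfalso
      have e1 : p1 = i := congrArg Prod.fst hp
      rw [← h, e1] at hq
      exact hiu q2 hq.1
    · exfalso
      have e1 : q1 = i := congrArg Prod.fst hq
      rw [h, e1] at hp
      exact hiu p2 hp.1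
    · exact hR.2.1 _ hp.1 _ hq.1 h
  · rintro ⟨p1, p2⟩ hp ⟨q1, q2⟩ hq h
    simp only at h
    rcases Set.mem_insert_iff.mp hp with hp | hp <;>
      rcases Set.mem_insert_iff.mp hq with hq | hq
    · rw [hp, hq]
    · exfalso
      have e2 : p2 = j := congrArg Prod.snd hp
      have e : j = q2 := by rw [← e2]; exact h
      have heq := hR.2.2 (l, j) hlj (q1, q2) hq.1 e
      exact hq.2 heq.symm
    · exfalso
      have e2 : q2 = j := congrArg Prod.snd hq
      have e : j = p2 := by rw [← e2]; exact h.symm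
      have heq := hR.2.2 (l, j) hlj (p1, p2) hp.1 e
      exact hp.2 heq.symm
    · exact hR.2.2 _ hp.1 _ hq.1 h
  · have hpq : ((l, j) : ι × ι) ≠ (i, j) := by
      intro h; exact hli (congrArg Prod.fst h)
    have := phi_swap a b hpq hd2 hd1
    have hrk : rkk a b l < rkk a b i := rkk_lt a b hlt
    have hw : wt a b (i, j) - wt a b (l, j) = (rkk a b i : ℤ) - rkk a b l := by
      unfold wt; push_cast; ring
    omega

end Main3

/-- A `ρ`-matching `R` is maximal in the domination order iff for every pair `(i,j)`
with `i ∈ Y^ρ`, `j ∈ X^ρ` and `Δ_i ≺ Δ_j`, exactly one of the following holds: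
(1) both `R(i)` and `R⁻¹(j)` are defined; (2) `R(i)` is defined, `R⁻¹(j)` is undefined
and `Δ_j ≥ Δ_{R(i)}`; (3) `R(i)` is undefined, `R⁻¹(j)` is defined and
`Δ_i ≤ Δ_{R⁻¹(j)}`. -/
theorem stmt14 {ι : Type} [Fintype ι] (a b : ι → ℤ) (hab : ∀ i, a i ≤ b i) (ρ : ℤ)
    (R : Set (ι × ι)) (hR : IsMatching a b ρ R) :
    (∀ R' : Set (ι × ι), Relation.ReflTransGen (Dominates a b ρ) R R' →
        Relation.ReflTransGen (Dominates a b ρ) R' R) ↔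
      (∀ i j : ι, a i = ρ → a j = ρ + 1 → SegPrec (a i) (b i) (a j) (b j) →
        (((∃ k, (i, k) ∈ R) ∧ (∃ l, (l, j) ∈ R)) ∨
          ((∃ k, (i, k) ∈ R ∧ SegLE (a k) (b k) (a j) (b j)) ∧ (∀ l, (l, j) ∉ R)) ∨
          ((∀ k, (i, k) ∉ R) ∧ (∃ l, (l, j) ∈ R ∧ SegLE (a i) (b i) (a l) (b l))))) := by
  constructor
  · intro hmax i j hi hj hprec
    by_contra hcon
    obtain ⟨h1, h23⟩ := not_or.mp hcon
    obtain ⟨h2, h3⟩ := not_or.mp h23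
    have hex : ∃ R', Dominates a b ρ R R' ∧ phi a b R < phi a b R' := by
      by_cases hm : ∃ k, (i, k) ∈ R
      · obtain ⟨k, hk⟩ := hm
        by_cases hn : ∀ l, (l, j) ∉ R
        · have hle : ¬ SegLE (a k) (b k) (a j) (b j) := fun hle => h2 ⟨⟨k, hk, hle⟩, hn⟩
          exact construct_B hR hi hj hprec hk hn (not_segLE hle)
        · push_neg at hn
          obtain ⟨l, hl⟩ := hn
          exact absurd ⟨⟨k, hk⟩, ⟨l, hl⟩⟩ h1
      · push_neg at hm
        by_cases hn : ∃ l, (l, j) ∈ R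
        · obtain ⟨l, hl⟩ := hn
          have hle : ¬ SegLE (a i) (b i) (a l) (b l) := fun hle => h3 ⟨hm, l, hl, hle⟩
          exact construct_C hR hi hj hprec hl hm (not_segLE hle)
        · push_neg at hn
          exact construct_A hR hi hj hprec hm hn
    obtain ⟨R', hdom, hlt⟩ := hex
    have hback := hmax R' (Relation.ReflTransGen.single hdom)
    have := phi_chain hback
    omega
  · intro hcond R' hRR'
    have heq : R' = R := by
      induction hRR' with
      | refl => rfl
      | tail _ hstep ih =>
        rw [ih] at hstep
        exact dominates_eq hcond hstep
    rw [heq]
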